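/- arXiv:1103.5531 — 5 statements merged into one kernel-verified Lean document; each statement's English description precedes it below -/
import Mathlib

section
/- Let G be a finite simple graph such that every acyclic coloring of G is also a star coloring of G. Then G is a cograph, i.e., G contains no induced path on four vertices. -/
open SimpleGraph

/-- A proper vertex coloring: adjacent vertices receive distinct colors. -/
def IsProperColoring {V α : Type*} (G : SimpleGraph V) (φ : V → α) : Prop :=
  ∀ ⦃u v : V⦄, G.Adj u v → φ u ≠ φ v

/-- An acyclic coloring: a proper coloring such that the subgraph induced by the
union of any two color classes contains no cycle. -/
def IsAcyclicColoring {V α : Type*} (G : SimpleGraph V) (φ : V → α) : Prop :=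
  IsProperColoring G φ ∧
    ∀ c₁ c₂ : α, (G.induce {v | φ v = c₁ ∨ φ v = c₂}).IsAcyclic

/-- A graph contains a path on four (distinct) vertices `a-b-c-d`,
not necessarily induced. -/
def HasP4 {V : Type*} (G : SimpleGraph V) : Prop :=
  ∃ a b c d : V, a ≠ b ∧ a ≠ c ∧ a ≠ d ∧ b ≠ c ∧ b ≠ d ∧ c ≠ d ∧
    G.Adj a b ∧ G.Adj b c ∧ G.Adj c d

/-- A star coloring: a proper coloring such that the subgraph induced by the
union of any two color classes contains no path on four vertices. -/
def IsStarColoring {V α : Type*} (G : SimpleGraph V) (φ : V → α) : Prop :=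
  IsProperColoring G φ ∧
    ∀ c₁ c₂ : α, ¬ HasP4 (G.induce {v | φ v = c₁ ∨ φ v = c₂})

/-- A cograph: a graph with no induced path on four vertices. -/
def IsCograph {V : Type*} (G : SimpleGraph V) : Prop :=
  ¬ ∃ a b c d : V, a ≠ b ∧ a ≠ c ∧ a ≠ d ∧ b ≠ c ∧ b ≠ d ∧ c ≠ d ∧
    G.Adj a b ∧ G.Adj b c ∧ G.Adj c d ∧
    ¬ G.Adj a c ∧ ¬ G.Adj a d ∧ ¬ G.Adj b d

/-- The acyclic chromatic number: the least number of colors in an acyclic coloring. -/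
noncomputable def acyclicChromaticNumber {V : Type*} (G : SimpleGraph V) : ℕ :=
  sInf {n : ℕ | ∃ φ : V → Fin n, IsAcyclicColoring G φ}

/-- The star chromatic number: the least number of colors in a star coloring. -/
noncomputable def starChromaticNumber {V : Type*} (G : SimpleGraph V) : ℕ :=
  sInf {n : ℕ | ∃ φ : V → Fin n, IsStarColoring G φ}

/-- A cycle is induced if the only edges of the graph among its vertices
are the edges of the cycle. -/
def SimpleGraph.Walk.IsInducedCycle {V : Type*} {G : SimpleGraph V} {v : V}
    (p : G.Walk v v) : Prop :=
  p.IsCycle ∧ ∀ u w : V, u ∈ p.support → w ∈ p.support → G.Adj u w → s(u, w) ∈ p.edges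

/-- A graph is chordal if it has no induced cycle on four or more vertices. -/
def IsChordal {V : Type*} (G : SimpleGraph V) : Prop :=
  ∀ (v : V) (p : G.Walk v v), p.IsInducedCycle → p.length ≤ 3

/-- The treewidth of `G`: the minimum of `ω(G⁺) - 1` over all triangulations
(chordal supergraphs on the same vertex set) `G⁺` of `G`. -/
noncomputable def treewidth {V : Type*} (G : SimpleGraph V) : ℕ :=
  sInf {k : ℕ | ∃ H : SimpleGraph V, G ≤ H ∧ IsChordal H ∧ k = H.cliqueNum - 1}

/-- An interval graph: vertices can be mapped to real closed intervals so that
two distinct vertices are adjacent iff their intervals intersect. -/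
def IsIntervalGraph {V : Type*} (G : SimpleGraph V) : Prop :=
  ∃ f : V → ℝ × ℝ, ∀ u v : V, u ≠ v →
    (G.Adj u v ↔ (Set.Icc (f u).1 (f u).2 ∩ Set.Icc (f v).1 (f v).2).Nonempty)

/-- The pathwidth of `G`: the minimum of `ω(G⁺) - 1` over all intervalizations
(interval supergraphs on the same vertex set) `G⁺` of `G`. -/
noncomputable def pathwidth {V : Type*} (G : SimpleGraph V) : ℕ :=
  sInf {k : ℕ | ∃ H : SimpleGraph V, G ≤ H ∧ IsIntervalGraph H ∧ k = H.cliqueNum - 1}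

/-- The join of two graphs on disjoint vertex sets: their disjoint union together
with all edges between the two sides. -/
def SimpleGraph.join {V₁ V₂ : Type*} (G₁ : SimpleGraph V₁) (G₂ : SimpleGraph V₂) :
    SimpleGraph (V₁ ⊕ V₂) where
  Adj x y :=
    match x, y with
    | Sum.inl a, Sum.inl b => G₁.Adj a b
    | Sum.inr a, Sum.inr b => G₂.Adj a b
    | Sum.inl _, Sum.inr _ => True
    | Sum.inr _, Sum.inl _ => True
  symm := ⟨by rintro (a | a) (b | b) h <;> simp_all <;> exact h.symm⟩
  loopless := ⟨by rintro (a | a) h <;> simp_all⟩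



/-!
If `a - b - c - d` is an induced path, colour `a, c` alike, `b, d` alike, and give every other
vertex a colour of its own. The two shared classes span exactly the path `a - b - c - d`, so the
colouring is not a star colouring. It is acyclic: the path itself is a tree, and any other two
classes span at most three vertices and contain at most one of the non-adjacent pairs `{a, c}`,
`{b, d}`, so they induce a subgraph of a path on three vertices.
-/

namespace SimpleGraph

-- The two neighbours of the largest vertex of a cycle would both be covered by it, hence equal.
theorem isAcyclic_hasse {α : Type*} [LinearOrder α] : (hasse α).IsAcyclic := by
  intro v c hc
  classical
  obtain ⟨u, hu, hmax⟩ := c.support.toFinset.exists_max_image id ⟨v, by simp⟩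
  rw [List.mem_toFinset] at hu
  set c' := c.rotate u hu
  have hc' : c'.IsCycle := hc.rotate hu
  have covBy_of_mem {x : α} (hx : x ∈ c'.support) (hadj : (hasse α).Adj x u) : x ⋖ u :=
    hadj.resolve_right fun h ↦ h.lt.not_ge <| hmax x <| by
      simpa using (c.mem_support_rotate_iff u hu).mp hx
  exact hc'.snd_ne_penultimate <|
    (covBy_of_mem (c'.getVert_mem_support 1) (c'.adj_snd hc'.not_nil).symm).unique_left
      (covBy_of_mem (c'.getVert_mem_support _) (c'.adj_penultimate hc'.not_nil))

theorem isAcyclic_pathGraph (n : ℕ) : (pathGraph n).IsAcyclic :=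
  isAcyclic_hasse

variable {V : Type*} {G : SimpleGraph V} {S T : Set V}

theorem IsAcyclic.induce_of_subset (h : (G.induce T).IsAcyclic) (hST : S ⊆ T) :
    (G.induce S).IsAcyclic :=
  h.embedding (G.induceHomOfLE hST)

theorem isAcyclic_induce_of_subset_pair {u w : V} (hS : S ⊆ {u, w}) :
    (G.induce S).IsAcyclic :=
  .of_card_le_two <| (Set.encard_le_encard hS).trans <|
    (Set.encard_insert_le _ _).trans (by rw [Set.encard_singleton]; rfl)

theorem isAcyclic_induce_of_subset_range {n : ℕ} {p : Fin n → V} (hp : p.Injective)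
    (hadj : ∀ i j, G.Adj (p i) (p j) → (pathGraph n).Adj i j) (hS : S ⊆ Set.range p) :
    (G.induce S).IsAcyclic := by
  let f : G.induce S →g pathGraph n :=
    { toFun := fun v ↦ (Equiv.ofInjective p hp).symm ⟨v, hS v.2⟩
      map_rel' := fun {v w} h ↦ hadj _ _ <| by
        simpa only [Equiv.apply_ofInjective_symm, comap_adj,
          Function.Embedding.subtype_apply] using h }
  refine (isAcyclic_pathGraph n).comap f fun v w hvw ↦ Subtype.ext ?_
  simpa [f, Equiv.apply_ofInjective_symm] using congrArg p hvw

theorem isAcyclic_induce_of_subset_triple {u x w : V} (hux : u ≠ x) (huw : u ≠ w) (hxw : x ≠ w)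
    (hnadj : ¬G.Adj u w) (hS : S ⊆ {u, x, w}) : (G.induce S).IsAcyclic := by
  refine isAcyclic_induce_of_subset_range (p := ![u, x, w]) ?_ ?_ ?_
  · intro i j h
    fin_cases i <;> fin_cases j <;> simp_all [eq_comm]
  · intro i j h
    fin_cases i <;> fin_cases j <;> simp_all [pathGraph_adj, G.adj_comm w u]
  · intro v hv
    rcases hS hv with rfl | rfl | rfl
    exacts [⟨0, rfl⟩, ⟨1, rfl⟩, ⟨2, rfl⟩]

theorem isAcyclicColoring_of_forall_attained_colors {α : Type*} {φ : V → α}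
    (hφ : IsProperColoring G φ)
    (h : ∀ x y, (G.induce {v | φ v = φ x ∨ φ v = φ y}).IsAcyclic) :
    IsAcyclicColoring G φ := by
  refine ⟨hφ, fun c₁ c₂ ↦ ?_⟩
  rcases em (∃ x, φ x = c₁) with ⟨x, rfl⟩ | h₁ <;>
    rcases em (∃ y, φ y = c₂) with ⟨y, rfl⟩ | h₂
  · exact h x y
  · exact (h x x).induce_of_subset fun v hv ↦ .inl <| hv.resolve_right fun hv ↦ h₂ ⟨v, hv⟩
  · exact (h y y).induce_of_subset fun v hv ↦ .inl <| hv.resolve_left fun hv ↦ h₁ ⟨v, hv⟩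
  · have : IsEmpty {v | φ v = c₁ ∨ φ v = c₂} :=
      ⟨fun ⟨v, hv⟩ ↦ hv.elim (fun hv ↦ h₁ ⟨v, hv⟩) fun hv ↦ h₂ ⟨v, hv⟩⟩
    exact .of_subsingleton

def twoPairsColoring [DecidableEq V] (e : V → ℕ) (a b c d v : V) : ℕ :=
  if v = a ∨ v = c then 0 else if v = b ∨ v = d then 1 else e v + 2

variable (G) in
structure IsInducedP4 (a b c d : V) : Prop where
  ne_ab : a ≠ b
  ne_ac : a ≠ c
  ne_ad : a ≠ d
  ne_bc : b ≠ c
  ne_bd : b ≠ d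
  ne_cd : c ≠ d
  adj_ab : G.Adj a b
  adj_bc : G.Adj b c
  adj_cd : G.Adj c d
  not_adj_ac : ¬G.Adj a c
  not_adj_ad : ¬G.Adj a d
  not_adj_bd : ¬G.Adj b d

namespace IsInducedP4

variable {a b c d : V}

theorem isAcyclic_induce_of_subset (hP : G.IsInducedP4 a b c d) (hS : S ⊆ {a, b, c, d}) :
    (G.induce S).IsAcyclic := by
  obtain ⟨hab, hac, had, hbc, hbd, hcd, -, -, -, hac', had', hbd'⟩ := hP
  refine isAcyclic_induce_of_subset_range (p := ![a, b, c, d]) ?_ ?_ ?_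
  · intro i j h
    fin_cases i <;> fin_cases j <;> simp_all [eq_comm]
  · intro i j h
    fin_cases i <;> fin_cases j <;>
      simp_all [pathGraph_adj, G.adj_comm c a, G.adj_comm d a, G.adj_comm d b]
  · intro v hv
    rcases hS hv with rfl | rfl | rfl | rfl
    exacts [⟨0, rfl⟩, ⟨1, rfl⟩, ⟨2, rfl⟩, ⟨3, rfl⟩]

variable [DecidableEq V] {e : V → ℕ}

theorem setOf_twoPairsColoring_eq (hP : G.IsInducedP4 a b c d) (he : e.Injective) (x : V) :
    {v | twoPairsColoring e a b c d v = twoPairsColoring e a b c d x} = {a, c} ∨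
    {v | twoPairsColoring e a b c d v = twoPairsColoring e a b c d x} = {b, d} ∨
    {v | twoPairsColoring e a b c d v = twoPairsColoring e a b c d x} = {x} ∧
      x ≠ a ∧ x ≠ b ∧ x ≠ c ∧ x ≠ d := by
  obtain ⟨hab, -, had, hbc, -, hcd, -, -, -, -, -, -⟩ := hP
  simp only [twoPairsColoring, Set.ext_iff, Set.mem_ofPred_eq, Set.mem_insert_iff,
    Set.mem_singleton_iff]
  split_ifs with h₁ h₂
  · exact .inl fun v ↦ by split_ifs <;> grind
  · exact .inr <| .inl fun v ↦ by split_ifs <;> grind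
  · exact .inr <| .inr ⟨fun v ↦ by split_ifs <;> grind [he.eq_iff], by tauto⟩
theorem isProperColoring_twoPairsColoring (hP : G.IsInducedP4 a b c d) (he : e.Injective) :
    IsProperColoring G (twoPairsColoring e a b c d) := by
  intro u v huv hφ
  have hu : u ∈ {w | twoPairsColoring e a b c d w = twoPairsColoring e a b c d u} := rfl
  have hv : v ∈ {w | twoPairsColoring e a b c d w = twoPairsColoring e a b c d u} := hφ.symm
  rcases hP.setOf_twoPairsColoring_eq he u with h | h | ⟨h, -⟩ <;> rw [h] at hu hv <;>
    simp only [Set.mem_insert_iff, Set.mem_singleton_iff] at hu hv <;>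
    rcases hu with rfl | rfl <;> rcases hv with rfl | rfl <;>
    first
      | exact huv.ne rfl
      | exact hP.not_adj_ac huv
      | exact hP.not_adj_ac huv.symm
      | exact hP.not_adj_bd huv
      | exact hP.not_adj_bd huv.symm

theorem isAcyclicColoring_twoPairsColoring (hP : G.IsInducedP4 a b c d) (he : e.Injective) :
    IsAcyclicColoring G (twoPairsColoring e a b c d) := by
  refine isAcyclicColoring_of_forall_attained_colors (hP.isProperColoring_twoPairsColoring he)
    fun x y ↦ ?_
  rw [Set.ofPred_or]
  rcases hP.setOf_twoPairsColoring_eq he x with hx | hx | ⟨hx, hxa, hxb, hxc, hxd⟩ <;>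
    rcases hP.setOf_twoPairsColoring_eq he y with hy | hy | ⟨hy, hya, hyb, hyc, hyd⟩ <;>
    rw [hx, hy]
  · exact isAcyclic_induce_of_subset_pair (Set.union_self _).subset
  · exact hP.isAcyclic_induce_of_subset (by grind)
  · exact isAcyclic_induce_of_subset_triple hya.symm hP.ne_ac hyc hP.not_adj_ac
      (by grind)
  · exact hP.isAcyclic_induce_of_subset (by grind)
  · exact isAcyclic_induce_of_subset_pair (Set.union_self _).subset
  · exact isAcyclic_induce_of_subset_triple hyb.symm hP.ne_bd hyd hP.not_adj_bd
      (by grind)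
  · exact isAcyclic_induce_of_subset_triple hxa.symm hP.ne_ac hxc hP.not_adj_ac
      (by grind)
  · exact isAcyclic_induce_of_subset_triple hxb.symm hP.ne_bd hxd hP.not_adj_bd
      (by grind)
  · exact isAcyclic_induce_of_subset_pair subset_rfl

theorem not_isStarColoring_twoPairsColoring (hP : G.IsInducedP4 a b c d) :
    ¬IsStarColoring G (twoPairsColoring e a b c d) := by
  obtain ⟨hab, hac, had, hbc, hbd, hcd, hab', hbc', hcd', -, -, -⟩ := hP
  rintro ⟨-, hstar⟩
  refine hstar 0 1 ⟨⟨a, ?_⟩, ⟨b, ?_⟩, ⟨c, ?_⟩, ⟨d, ?_⟩, ?_⟩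
  · simp [twoPairsColoring]
  · simp [twoPairsColoring, hab.symm, hbc]
  · simp [twoPairsColoring]
  · simp [twoPairsColoring, had.symm, hcd.symm]
  · simp only [ne_eq, Subtype.mk.injEq, comap_adj, Function.Embedding.subtype_apply]
    exact ⟨hab, hac, had, hbc, hbd, hcd, hab', hbc', hcd'⟩

end IsInducedP4

end SimpleGraph

/-- If every acyclic coloring of a finite graph `G` is a star coloring,
then `G` is a cograph. -/
theorem cograph_of_acyclic_colorings_are_star_colorings {V : Type*} [Fintype V]
    (G : SimpleGraph V)
    (h : ∀ φ : V → ℕ, IsAcyclicColoring G φ → IsStarColoring G φ) :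
    IsCograph G := by
  classical
  rintro ⟨a, b, c, d, hab, hac, had, hbc, hbd, hcd, hab', hbc', hcd', hac', had', hbd'⟩
  have hP : G.IsInducedP4 a b c d :=
    ⟨hab, hac, had, hbc, hbd, hcd, hab', hbc', hcd', hac', had', hbd'⟩
  obtain ⟨e, he⟩ := Countable.exists_injective_nat V
  exact hP.not_isStarColoring_twoPairsColoring (h _ (hP.isAcyclicColoring_twoPairsColoring he))
end

section
/- For every cograph G, the star chromatic number of G equals the acyclic chromatic number of G: χ_s(G) = χ_a(G). -/
open SimpleGraph

/-!
Both conditions only concern the subgraph induced by two colour classes of a proper colouring,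
which is triangle-free. A triangle-free graph with a cycle contains a path on four vertices, so
every star colouring is acyclic. Conversely, a bichromatic path `a-b-c-d` of an acyclic colouring
has `φ a = φ c` and `φ b = φ d`, so `ac` and `bd` are non-edges; in a cograph `ad` must then be an
edge, which closes a bichromatic 4-cycle.
-/

namespace SimpleGraph

variable {V : Type*} {G : SimpleGraph V}

theorem Walk.IsPath.hasP4 {u v : V} {p : G.Walk u v} (hp : p.IsPath) (hlen : 3 ≤ p.length) :
    HasP4 G := by
  rcases p with _ | ⟨hab, _ | ⟨hbc, _ | ⟨hcd, q⟩⟩⟩ <;> simp at hlen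
  have hd := q.start_mem_support
  have hnodup := hp.support_nodup
  simp only [support_cons, List.nodup_cons, List.mem_cons, not_or] at hnodup
  exact ⟨_, _, _, _, hnodup.1.1, hnodup.1.2.1, fun h ↦ hnodup.1.2.2 (h ▸ hd),
    hnodup.2.1.1, fun h ↦ hnodup.2.1.2 (h ▸ hd), fun h ↦ hnodup.2.2.1 (h ▸ hd), hab, hbc, hcd⟩

theorem CliqueFree.hasP4_of_not_isAcyclic (hG : G.CliqueFree 3) (h : ¬G.IsAcyclic) : HasP4 G := by
  simp only [IsAcyclic, not_forall, not_not] at h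
  obtain ⟨u, _ | ⟨hua, q⟩, hc⟩ := h
  · exact absurd hc Walk.not_isCycle_nil
  have hlen := hc.three_le_length
  obtain ⟨hq, -⟩ := (Walk.cons_isCycle_iff q hua).mp hc
  rw [Walk.length_cons] at hlen
  rcases (show q.length = 2 ∨ 3 ≤ q.length by omega) with hq2 | hq3
  · rcases q with _ | ⟨hab, _ | ⟨hbu, _ | ⟨_, _⟩⟩⟩ <;> simp at hq2
    classical
    exact (hG _ (is3Clique_triple_iff.mpr ⟨hua, hbu.symm, hab⟩)).elim
  · exact hq.hasP4 hq3

theorem not_isAcyclic_of_four_cycle {a b c d : V} (hab : a ≠ b) (hac : a ≠ c)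
    (had : a ≠ d) (hbc : b ≠ c) (hbd : b ≠ d) (hcd : c ≠ d) (hab' : G.Adj a b) (hbc' : G.Adj b c)
    (hcd' : G.Adj c d) (hda' : G.Adj d a) : ¬G.IsAcyclic := fun hG ↦
  hG (.cons hab' (.cons hbc' (.cons hcd' (.cons hda' .nil)))) <| by
    classical
    simp [Walk.cons_isCycle_iff, hab, hac, had, hbc, hbd, hcd, hab.symm, hac.symm, had.symm]

end SimpleGraph

section Coloring

variable {V α : Type*} {G : SimpleGraph V} {φ : V → α}

theorem IsProperColoring.cliqueFree_induce_two_colors (hφ : IsProperColoring G φ) (c₁ c₂ : α) :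
    (G.induce {v | φ v = c₁ ∨ φ v = c₂}).CliqueFree 3 := by
  classical
  let C : (G.induce {v | φ v = c₁ ∨ φ v = c₂}).Coloring Bool :=
    Coloring.mk (fun v ↦ decide (φ v = c₁)) fun {v w} hvw ↦ by
      have hvw : φ v ≠ φ w := hφ hvw
      have hv : φ v = c₁ ∨ φ v = c₂ := v.2
      have hw : φ w = c₁ ∨ φ w = c₂ := w.2
      grind
  exact C.colorable.cliqueFree (by simp)

theorem IsStarColoring.isAcyclicColoring (hφ : IsStarColoring G φ) : IsAcyclicColoring G φ :=
  ⟨hφ.1, fun c₁ c₂ ↦ not_not.mp fun h ↦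
    hφ.2 c₁ c₂ ((hφ.1.cliqueFree_induce_two_colors c₁ c₂).hasP4_of_not_isAcyclic h)⟩

theorem IsCograph.isStarColoring_of_isAcyclicColoring (hG : IsCograph G)
    (hφ : IsAcyclicColoring G φ) : IsStarColoring G φ := by
  refine ⟨hφ.1, fun c₁ c₂ ⟨a, b, c, d, hab, hac, had, hbc, hbd, hcd, hab', hbc', hcd'⟩ ↦ ?_⟩
  have hφab : φ a ≠ φ b := hφ.1 hab'
  have hφbc : φ b ≠ φ c := hφ.1 hbc'
  have hφcd : φ c ≠ φ d := hφ.1 hcd'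
  have ha : φ a = c₁ ∨ φ a = c₂ := a.2
  have hb : φ b = c₁ ∨ φ b = c₂ := b.2
  have hc : φ c = c₁ ∨ φ c = c₂ := c.2
  have hd : φ d = c₁ ∨ φ d = c₂ := d.2
  have hac' : ¬G.Adj a c := fun h ↦ hφ.1 h (by grind)
  have hbd' : ¬G.Adj b d := fun h ↦ hφ.1 h (by grind)
  have hda' : G.Adj d a := by
    by_contra had'
    exact hG ⟨a, b, c, d, Subtype.coe_ne_coe.mpr hab, Subtype.coe_ne_coe.mpr hac,
      Subtype.coe_ne_coe.mpr had, Subtype.coe_ne_coe.mpr hbc, Subtype.coe_ne_coe.mpr hbd,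
      Subtype.coe_ne_coe.mpr hcd, hab', hbc', hcd', hac', fun h ↦ had' h.symm, hbd'⟩
  exact not_isAcyclic_of_four_cycle hab hac had hbc hbd hcd hab' hbc' hcd' hda'
    (hφ.2 c₁ c₂)

end Coloring

theorem starChromaticNumber_eq_acyclicChromaticNumber_of_cograph_general {V : Type*}
    (G : SimpleGraph V) (hG : IsCograph G) :
    starChromaticNumber G = acyclicChromaticNumber G := by
  unfold starChromaticNumber acyclicChromaticNumber
  congr! 3 with n
  exact exists_congr fun φ ↦
    ⟨IsStarColoring.isAcyclicColoring, hG.isStarColoring_of_isAcyclicColoring⟩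

/-- For every cograph, the star chromatic number equals the acyclic
chromatic number. -/
theorem starChromaticNumber_eq_acyclicChromaticNumber_of_cograph {V : Type*} [Fintype V]
    (G : SimpleGraph V) (hG : IsCograph G) :
    starChromaticNumber G = acyclicChromaticNumber G :=
  starChromaticNumber_eq_acyclicChromaticNumber_of_cograph_general G hG
end

section
/- For any finite simple graphs G1 = (V1, E1) and G2 = (V2, E2) on disjoint vertex sets, the star chromatic number of their join satisfies χ_s(G1 ⋈ G2) = min{χ_s(G1) + |V2|, χ_s(G2) + |V1|}. -/
open SimpleGraph

/-!
In a proper colouring a path on four vertices inside two colour classes alternates, so a star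
colouring is a proper colouring with no path `a - b - c - d` in which `a, c` and `b, d` share
colours. In a star colouring of `G₁ ⋈ G₂` one side is coloured injectively: repeated colours
`Φ u = Φ u'` on the left and `Φ v = Φ v'` on the right would give the bicoloured path
`u - v - u' - v'`. If it is the right side, its colours are also disjoint from those on the
left, which star colour `G₁`; this gives at least `χₛ(G₁) + |V₂|` colours. Conversely, an optimal
star colouring of `G₁` with a fresh colour for each vertex of `V₂` is a star colouring of the
join, as an alternating path repeats both of its colours.
-/

section

variable {V W V₁ V₂ α β : Type*}

theorem eq_of_ne_of_ne_of_mem_pair {x y z c₁ c₂ : α} (hx : x = c₁ ∨ x = c₂)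
    (hy : y = c₁ ∨ y = c₂) (hz : z = c₁ ∨ z = c₂) (hxy : x ≠ y) (hzy : z ≠ y) : x = z := by
  rcases hx with rfl | rfl <;> rcases hy with rfl | rfl <;> rcases hz with rfl | rfl <;> tauto

section StarColoring

variable {G : SimpleGraph V} {φ : V → α}

theorem isStarColoring_iff :
    IsStarColoring G φ ↔ IsProperColoring G φ ∧
      ∀ ⦃a b c d⦄, G.Adj a b → G.Adj b c → G.Adj c d → a ≠ c → b ≠ d →
        φ a = φ c → φ b ≠ φ d := by
  refine ⟨fun h => ⟨h.1, fun a b c d hab hbc hcd hac hbd hφac hφbd => ?_⟩, fun h => ⟨h.1, ?_⟩⟩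
  · have had : a ≠ d := by rintro rfl; exact h.1 hcd hφac.symm
    exact h.2 (φ a) (φ b) ⟨⟨a, .inl rfl⟩, ⟨b, .inr rfl⟩, ⟨c, .inl hφac.symm⟩, ⟨d, .inr hφbd.symm⟩,
      by simpa using hab.ne, by simpa using hac, by simpa using had, by simpa using hbc.ne,
      by simpa using hbd, by simpa using hcd.ne, hab, hbc, hcd⟩
  · rintro c₁ c₂ ⟨⟨a, ha⟩, ⟨b, hb⟩, ⟨c, hc⟩, ⟨d, hd⟩, -, hac, -, -, hbd, -, hab, hbc, hcd⟩
    exact h.2 hab hbc hcd (by simpa using hac) (by simpa using hbd)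
      (eq_of_ne_of_ne_of_mem_pair ha hb hc (h.1 hab) (h.1 hbc).symm)
      (eq_of_ne_of_ne_of_mem_pair hb hc hd (h.1 hbc) (h.1 hcd).symm)

theorem isStarColoring_of_injective (hφ : Function.Injective φ) : IsStarColoring G φ :=
  isStarColoring_iff.2 ⟨fun _ _ h hφuv => h.ne (hφ hφuv), fun _ _ _ _ _ _ _ hac _ hφac =>
    absurd (hφ hφac) hac⟩

theorem IsStarColoring.comp_injective {g : α → β} (hφ : IsStarColoring G φ)
    (hg : Function.Injective g) : IsStarColoring G (g ∘ φ) := by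
  obtain ⟨hprop, hP4⟩ := isStarColoring_iff.1 hφ
  exact isStarColoring_iff.2 ⟨fun _ _ h huv => hprop h (hg huv),
    fun _ _ _ _ hab hbc hcd hac hbd hφac hφbd => hP4 hab hbc hcd hac hbd (hg hφac) (hg hφbd)⟩

theorem IsStarColoring.of_comp {g : α → β} (hφ : IsStarColoring G (g ∘ φ)) :
    IsStarColoring G φ := by
  obtain ⟨hprop, hP4⟩ := isStarColoring_iff.1 hφ
  exact isStarColoring_iff.2 ⟨fun _ _ h huv => hprop h (congrArg g huv),
    fun _ _ _ _ hab hbc hcd hac hbd hφac hφbd =>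
      hP4 hab hbc hcd hac hbd (congrArg g hφac) (congrArg g hφbd)⟩

theorem IsStarColoring.comap {H : SimpleGraph W} {ψ : W → α} (hψ : IsStarColoring H ψ)
    (f : G.Copy H) : IsStarColoring G (ψ ∘ f) := by
  obtain ⟨hprop, hP4⟩ := isStarColoring_iff.1 hψ
  exact isStarColoring_iff.2 ⟨fun _ _ h => hprop (f.toHom.map_adj h),
    fun _ _ _ _ hab hbc hcd hac hbd => hP4 (f.toHom.map_adj hab) (f.toHom.map_adj hbc)
      (f.toHom.map_adj hcd) (f.injective.ne hac) (f.injective.ne hbd)⟩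

theorem starChromaticNumber_le_card [Finite α] (hφ : IsStarColoring G φ) :
    starChromaticNumber G ≤ Nat.card α :=
  Nat.sInf_le ⟨Finite.equivFin α ∘ φ, hφ.comp_injective (Finite.equivFin α).injective⟩

variable (G) in
theorem exists_isStarColoring_fin_starChromaticNumber [Finite V] :
    ∃ φ : V → Fin (starChromaticNumber G), IsStarColoring G φ :=
  Nat.sInf_mem (s := {n | ∃ φ : V → Fin n, IsStarColoring G φ})
    ⟨_, _, isStarColoring_of_injective (Finite.equivFin V).injective⟩

theorem SimpleGraph.Iso.starChromaticNumber_eq {H : SimpleGraph W} (e : G ≃g H) :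
    starChromaticNumber G = starChromaticNumber H := by
  refine congrArg sInf (Set.ext fun n => ⟨?_, ?_⟩)
  · exact fun ⟨φ, hφ⟩ => ⟨φ ∘ e.symm, hφ.comap e.symm.toCopy⟩
  · exact fun ⟨ψ, hψ⟩ => ⟨ψ ∘ e, hψ.comap e.toCopy⟩

end StarColoring

namespace SimpleGraph

variable (G₁ : SimpleGraph V₁) (G₂ : SimpleGraph V₂)

def joinComm : G₁.join G₂ ≃g G₂.join G₁ where
  toEquiv := Equiv.sumComm V₁ V₂
  map_rel_iff' := by rintro (u | u) (v | v) <;> rfl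

def joinInl : G₁.Copy (G₁.join G₂) := Hom.toCopy ⟨Sum.inl, id⟩ Sum.inl_injective

end SimpleGraph

section Join

variable {G₁ : SimpleGraph V₁} {G₂ : SimpleGraph V₂}

theorem isStarColoring_join_sumMap {φ : V₁ → α} {ψ : V₂ → β} (hφ : IsStarColoring G₁ φ)
    (hψ : Function.Injective ψ) : IsStarColoring (G₁.join G₂) (Sum.map φ ψ) := by
  obtain ⟨hprop, hP4⟩ := isStarColoring_iff.1 hφ
  have eq_inr {w : V₁ ⊕ V₂} {y : V₂} (h : Sum.map φ ψ w = Sum.map φ ψ (.inr y)) :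
      w = .inr y := by
    rcases w with x | x
    · simp at h
    · simpa using hψ (by simpa using h)
  refine isStarColoring_iff.2 ⟨?_, ?_⟩
  · rintro (u | u) (v | v) h huv
    · exact hprop h (by simpa using huv)
    · simp at huv
    · simp at huv
    · exact h.ne (congrArg _ (hψ (by simpa using huv)))
  · rintro (a | a) (b | b) (c | c) (d | d) hab hbc hcd hac hbd hφac hφbd <;>
      first
      | exact hac (eq_inr hφac)
      | exact hac (eq_inr hφac.symm).symm
      | exact hbd (eq_inr hφbd)
      | exact hbd (eq_inr hφbd.symm).symm
      | exact hP4 hab hbc hcd (by simpa using hac) (by simpa using hbd) (by simpa using hφac)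
          (by simpa using hφbd)

theorem IsStarColoring.injective_comp_inl_or_inr {Φ : V₁ ⊕ V₂ → α}
    (hΦ : IsStarColoring (G₁.join G₂) Φ) :
    Function.Injective (Φ ∘ Sum.inl) ∨ Function.Injective (Φ ∘ Sum.inr) := by
  by_contra! h
  obtain ⟨u, u', hΦu, hu⟩ := Function.not_injective_iff.1 h.1
  obtain ⟨v, v', hΦv, hv⟩ := Function.not_injective_iff.1 h.2
  have hP4 := (isStarColoring_iff.1 hΦ).2
  exact hP4 (a := .inl u) (b := .inr v) (c := .inl u') (d := .inr v')
    trivial trivial trivial (by simpa using hu) (by simpa using hv) hΦu hΦv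

theorem IsStarColoring.starChromaticNumber_add_card_le [Finite α] [Finite V₂]
    {Φ : V₁ ⊕ V₂ → α} (hΦ : IsStarColoring (G₁.join G₂) Φ)
    (hinj : Function.Injective (Φ ∘ Sum.inr)) :
    starChromaticNumber G₁ + Nat.card V₂ ≤ Nat.card α := by
  have hφ : IsStarColoring G₁ (Set.rangeFactorization (Φ ∘ Sum.inl)) :=
    (hΦ.comap (joinInl G₁ G₂)).of_comp (g := Subtype.val)
  have hdisj (u : V₁) (v : V₂) : Φ (.inl u) ≠ Φ (.inr v) := hΦ.1 trivial
  calc starChromaticNumber G₁ + Nat.card V₂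
      ≤ Nat.card (Set.range (Φ ∘ Sum.inl)) + Nat.card V₂ := by
        gcongr; exact starChromaticNumber_le_card hφ
    _ = Nat.card (Set.range (Φ ∘ Sum.inl) ⊕ V₂) := Nat.card_sum.symm
    _ ≤ Nat.card α := Nat.card_le_card_of_injective _
        (Subtype.val_injective.sumElim hinj (by rintro ⟨_, u, rfl⟩ v; exact hdisj u v))

theorem starChromaticNumber_join_le [Finite V₁] [Finite V₂] :
    starChromaticNumber (G₁.join G₂) ≤ starChromaticNumber G₁ + Nat.card V₂ := by
  obtain ⟨φ, hφ⟩ := exists_isStarColoring_fin_starChromaticNumber G₁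
  simpa [Nat.card_sum] using
    starChromaticNumber_le_card (isStarColoring_join_sumMap (G₂ := G₂) hφ Function.injective_id)

end Join

end

/-- The star chromatic number of a join:
`χₛ(G₁ ⋈ G₂) = min (χₛ(G₁) + |V₂|) (χₛ(G₂) + |V₁|)`. -/
theorem starChromaticNumber_join {V₁ V₂ : Type*} [Fintype V₁] [Fintype V₂]
    (G₁ : SimpleGraph V₁) (G₂ : SimpleGraph V₂) :
    starChromaticNumber (G₁.join G₂) =
      min (starChromaticNumber G₁ + Fintype.card V₂)
        (starChromaticNumber G₂ + Fintype.card V₁) := by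
  simp only [← Nat.card_eq_fintype_card]
  refine le_antisymm (le_min starChromaticNumber_join_le ?_) ?_
  · exact (joinComm G₁ G₂).starChromaticNumber_eq ▸ starChromaticNumber_join_le
  obtain ⟨Φ, hΦ⟩ := exists_isStarColoring_fin_starChromaticNumber (G₁.join G₂)
  rcases hΦ.injective_comp_inl_or_inr with hinl | hinr
  · simpa using min_le_of_right_le
      ((hΦ.comap (joinComm G₂ G₁).toCopy).starChromaticNumber_add_card_le hinl)
  · simpa using min_le_of_left_le (hΦ.starChromaticNumber_add_card_le hinr)
end

section
/- Let G1 = (V1, E1) and G2 = (V2, E2) be finite simple graphs on disjoint vertex sets and let φ be an acyclic coloring of their join G1 ⋈ G2. Then the sets of colors assigned by φ to V1 and to V2 are disjoint, and moreover φ assigns pairwise distinct colors to all vertices of V1 or φ assigns pairwise distinct colors to all vertices of V2. -/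
open SimpleGraph

/-! In the join every vertex of `V₁` is adjacent to every vertex of `V₂`, so the two sides get
disjoint colors. If `a ≠ a'` in `V₁` shared a color and so did `b ≠ b'` in `V₂`, then
`a b a' b'` would be a cycle in the subgraph induced by these two color classes: in an acyclic
graph two distinct vertices have at most one common neighbour. -/

theorem SimpleGraph.IsAcyclic.commonNeighbors_subsingleton {V : Type*} {G : SimpleGraph V}
    (hG : G.IsAcyclic) {u x : V} (hux : u ≠ x) : (G.commonNeighbors u x).Subsingleton := by
  intro v hv w hw
  rw [mem_commonNeighbors] at hv hw
  let path {y : V} (huy : G.Adj u y) (hxy : G.Adj x y) : G.Path u x :=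
    ⟨.cons huy (.cons hxy.symm .nil), by simp [huy.ne, hxy.ne.symm, hux]⟩
  have hpaths := congrArg Subtype.val <|
    (hG.subsingleton_path u x).elim (path hv.1 hv.2) (path hw.1 hw.2)
  simp only [path, Walk.cons.injEq] at hpaths
  exact hpaths.1

theorem IsAcyclicColoring.eq_of_mem_commonNeighbors {V α : Type*} {G : SimpleGraph V}
    {φ : V → α} (hφ : IsAcyclicColoring G φ) {u x v w : V} (hux : u ≠ x) (hφux : φ u = φ x)
    (hv : v ∈ G.commonNeighbors u x) (hw : w ∈ G.commonNeighbors u x) (hφvw : φ v = φ w) :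
    v = w := by
  let S : Set V := {y | φ y = φ u ∨ φ y = φ v}
  have hsub := (hφ.2 (φ u) (φ v)).commonNeighbors_subsingleton
    (u := (⟨u, .inl rfl⟩ : S)) (x := ⟨x, .inl hφux.symm⟩) (by simpa using hux)
  exact congrArg Subtype.val <| @hsub ⟨v, .inr rfl⟩ (by simpa [mem_commonNeighbors] using hv)
    ⟨w, .inr hφvw.symm⟩ (by simpa [mem_commonNeighbors] using hw)

theorem SimpleGraph.join_adj_inl_inr {V₁ V₂ : Type*} (G₁ : SimpleGraph V₁) (G₂ : SimpleGraph V₂)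
    (a : V₁) (b : V₂) : (G₁.join G₂).Adj (Sum.inl a) (Sum.inr b) :=
  trivial

theorem acyclicColoring_join_disjoint_and_saturated_general {V₁ V₂ : Type*}
    (G₁ : SimpleGraph V₁) (G₂ : SimpleGraph V₂)
    (φ : V₁ ⊕ V₂ → ℕ) (hφ : IsAcyclicColoring (G₁.join G₂) φ) :
    (∀ (a : V₁) (b : V₂), φ (Sum.inl a) ≠ φ (Sum.inr b)) ∧
      (Function.Injective (fun a : V₁ => φ (Sum.inl a)) ∨
        Function.Injective (fun b : V₂ => φ (Sum.inr b))) := by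
  refine ⟨fun a b => hφ.1 (join_adj_inl_inr G₁ G₂ a b), ?_⟩
  by_contra! hboth
  simp only [Function.not_injective_iff] at hboth
  obtain ⟨⟨a, a', hφa, ha⟩, ⟨b, b', hφb, hb⟩⟩ := hboth
  have hcommon (c : V₂) :
      Sum.inr c ∈ (G₁.join G₂).commonNeighbors (Sum.inl a) (Sum.inl a') :=
    (mem_commonNeighbors _).2 ⟨join_adj_inl_inr G₁ G₂ a c, join_adj_inl_inr G₁ G₂ a' c⟩
  exact hb <| Sum.inr_injective <|
    hφ.eq_of_mem_commonNeighbors (Sum.inl_injective.ne ha) hφa (hcommon b) (hcommon b') hφb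

/-- In any acyclic coloring of a join, the two sides receive disjoint sets
of colors, and at least one side is rainbow (all its vertices get pairwise distinct
colors). -/
theorem acyclicColoring_join_disjoint_and_saturated {V₁ V₂ : Type*}
    [Fintype V₁] [Fintype V₂] (G₁ : SimpleGraph V₁) (G₂ : SimpleGraph V₂)
    (φ : V₁ ⊕ V₂ → ℕ) (hφ : IsAcyclicColoring (G₁.join G₂) φ) :
    (∀ (a : V₁) (b : V₂), φ (Sum.inl a) ≠ φ (Sum.inr b)) ∧
      (Function.Injective (fun a : V₁ => φ (Sum.inl a)) ∨
        Function.Injective (fun b : V₂ => φ (Sum.inr b))) :=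
  acyclicColoring_join_disjoint_and_saturated_general G₁ G₂ φ hφ
end

section
/- Let G be a finite simple graph and let G+ be a triangulation of G, i.e., a chordal graph on the same vertex set whose edge set contains that of G. Then every proper vertex coloring of G+ is an acyclic coloring of G. -/
/-!
A cycle of a chordal graph has a triangle among its vertices: an induced cycle is itself a
triangle, and a chord cuts off a shorter cycle on a subset of the vertices. A triangle needs
three colours, so the union of two colour classes of a proper colouring of a chordal graph
carries no cycle; the same then holds in every spanning subgraph.
-/

open SimpleGraph

namespace SimpleGraph.Walk

variable {V : Type*} {G : SimpleGraph V}

lemma mem_edges_of_length_eq_one {u v : V} : ∀ {p : G.Walk u v}, p.length = 1 → s(u, v) ∈ p.edges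
  | cons _ nil, _ => by simp

lemma exists_triangle_of_length_eq_three {v : V} :
    ∀ {p : G.Walk v v}, p.length = 3 →
      ∃ a ∈ p.support, ∃ b ∈ p.support, ∃ c ∈ p.support, G.Adj a b ∧ G.Adj b c ∧ G.Adj c a
  | cons h₁ (cons h₂ (cons h₃ nil)), _ => ⟨_, by simp, _, by simp, _, by simp, h₁, h₂, h₃⟩

/-- Rotated to start at `a`, the cycle's part from `a` to `b` closes up with the chord into a
cycle; the part from `b` back to `a` has length at least two, since `ab` is not an edge of it. -/
lemma IsCycle.exists_shorter_of_isChord [DecidableEq V] {v a b : V} {p : G.Walk v v}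
    (hp : p.IsCycle) (hab : p.IsChord s(a, b)) :
    ∃ (u : V) (c : G.Walk u u),
      c.IsCycle ∧ c.length < p.length ∧ ∀ x ∈ c.support, x ∈ p.support := by
  obtain ⟨hadj, hnotin, ha, hb⟩ := isChord_sym2Mk.mp hab
  set q := p.rotate a ha
  have hq : q.IsCycle := hp.rotate ha
  have hnotin_q : s(b, a) ∉ q.edges := by
    rw [Sym2.eq_swap, (p.rotate_edges a ha).mem_iff]
    exact hnotin
  have hb_q : b ∈ q.support := (p.mem_support_rotate_iff a ha).mpr hb
  set t := q.takeUntil b hb_q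
  set d := q.dropUntil b hb_q
  have hlen : t.length + d.length = q.length := by
    rw [← length_append, q.take_spec hb_q]
  have hd : 2 ≤ d.length := by
    have hd₀ : d.length ≠ 0 := fun h => hadj.ne (eq_of_length_eq_zero h).symm
    have hd₁ : d.length ≠ 1 := fun h =>
      hnotin_q (q.edges_dropUntil_subset_edges hb_q (mem_edges_of_length_eq_one h))
    omega
  refine ⟨b, cons hadj.symm t, ?_, ?_, ?_⟩
  · exact (cons_isCycle_iff t hadj.symm).mpr
      ⟨hq.isPath_takeUntil hb_q, fun h => hnotin_q (q.edges_takeUntil_subset_edges hb_q h)⟩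
  · have hq_len : q.length = p.length := p.length_rotate a ha
    rw [length_cons]
    omega
  · intro x hx
    rcases List.mem_cons.mp (support_cons _ _ ▸ hx) with rfl | hx
    · exact hb
    · exact (p.mem_support_rotate_iff a ha).mp (q.support_takeUntil_subset_support hb_q hx)

end SimpleGraph.Walk

section

variable {V α : Type*} {G H : SimpleGraph V}

lemma IsChordal.exists_triangle_of_isCycle (hG : IsChordal G) {v : V} {p : G.Walk v v}
    (hp : p.IsCycle) :
    ∃ a ∈ p.support, ∃ b ∈ p.support, ∃ c ∈ p.support, G.Adj a b ∧ G.Adj b c ∧ G.Adj c a := by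
  classical
  induction h : p.length using Nat.strong_induction_on generalizing v with
  | _ n ih =>
    by_cases hchordless : p.IsChordless
    · have hle : p.length ≤ 3 :=
        hG v p ⟨hp, fun _ _ hu hw hadj => hchordless.mem_edges hu hw hadj⟩
      exact Walk.exists_triangle_of_length_eq_three (le_antisymm hle hp.three_le_length)
    · obtain ⟨e, he⟩ : ∃ e, p.IsChord e := by
        simpa [Walk.IsChordless] using hchordless
      induction e using Sym2.ind with
      | _ a b =>
        obtain ⟨u, c, hc, hlt, hsub⟩ := hp.exists_shorter_of_isChord he
        obtain ⟨x, hx, y, hy, z, hz, hxy, hyz, hzx⟩ := ih c.length (h ▸ hlt) hc rfl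
        exact ⟨x, hsub x hx, y, hsub y hy, z, hsub z hz, hxy, hyz, hzx⟩

lemma IsProperColoring.not_two_colored_triangle {φ : V → α} (hφ : IsProperColoring G φ)
    {a b c : V} (hab : G.Adj a b) (hbc : G.Adj b c) (hca : G.Adj c a) (c₁ c₂ : α) :
    ¬ ((φ a = c₁ ∨ φ a = c₂) ∧ (φ b = c₁ ∨ φ b = c₂) ∧ (φ c = c₁ ∨ φ c = c₂)) := by
  have := hφ hab
  have := hφ hbc
  have := hφ hca
  grind

lemma IsChordal.isAcyclicColoring {φ : V → α} (hG : IsChordal G) (hφ : IsProperColoring G φ) :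
    IsAcyclicColoring G φ := by
  refine ⟨hφ, fun c₁ c₂ _ p hp => ?_⟩
  let f := Embedding.induce (G := G) {v | φ v = c₁ ∨ φ v = c₂}
  have hf : ∀ x ∈ (p.map f.toHom).support, φ x = c₁ ∨ φ x = c₂ := by
    simp only [Walk.support_map, List.mem_map]
    rintro _ ⟨y, -, rfl⟩
    exact y.2
  obtain ⟨a, ha, b, hb, c, hc, hab, hbc, hca⟩ :=
    hG.exists_triangle_of_isCycle (hp.map (f := f.toHom) f.injective)
  exact hφ.not_two_colored_triangle hab hbc hca c₁ c₂ ⟨hf a ha, hf b hb, hf c hc⟩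

lemma IsAcyclicColoring.anti {φ : V → α} (hGH : G ≤ H) (hφ : IsAcyclicColoring H φ) :
    IsAcyclicColoring G φ :=
  ⟨fun _ _ huv => hφ.1 (hGH huv), fun c₁ c₂ => (hφ.2 c₁ c₂).anti (comap_monotone _ hGH)⟩
end

theorem isAcyclicColoring_of_proper_coloring_of_triangulation_general {V : Type*}
    (G H : SimpleGraph V) (hGH : G ≤ H) (hH : IsChordal H)
    (φ : V → ℕ) (hφ : IsProperColoring H φ) :
    IsAcyclicColoring G φ :=
  (hH.isAcyclicColoring hφ).anti hGH

/-- Every proper coloring of a triangulation (chordal supergraph on the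
same vertex set) of `G` is an acyclic coloring of `G`. -/
theorem isAcyclicColoring_of_proper_coloring_of_triangulation {V : Type*} [Fintype V]
    (G H : SimpleGraph V) (hGH : G ≤ H) (hH : IsChordal H)
    (φ : V → ℕ) (hφ : IsProperColoring H φ) :
    IsAcyclicColoring G φ :=
  isAcyclicColoring_of_proper_coloring_of_triangulation_general G H hGH hH φ hφ
end
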